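/- Let G' be the Type C Whitney flip of a simple graph G along (H, v0, v1, v2, e). Then G' is bipartite if and only if G is bipartite. -/

import Mathlib

/-!
On `H` a 2-colouring of the flip is a 2-colouring of `G` transported along `ρ` with the two
colours exchanged; off `H`, and at `v1`, the two colourings agree. The exchange is forced at
`v0, v1, v2`: the edge `{v0, v2}` of `G` and the edge `{v0, v1}` of the flip are exactly what
makes the two descriptions consistent there. Edges inside `H` are mapped to edges by `ρ` and
keep their colour difference, and every other edge of `G - e` avoids `H \ {v1}`, so its
endpoints keep their colours.
-/

open SimpleGraph

/-- The vertex map of the Type C Whitney flip: `v0 ↦ v2`, `v1 ↦ v0`, all other vertices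
fixed. -/
def rhoC {V : Type*} [DecidableEq V] (v0 v1 v2 : V) (x : V) : V :=
  if x = v0 then v2 else if x = v1 then v0 else x

lemma rhoC_injOn {V : Type*} [DecidableEq V] {v0 v1 v2 : V} {H : Set V}
    (h02 : v0 ≠ v2) (hv2 : v2 ∉ H) : Set.InjOn (rhoC v0 v1 v2) H := by
  intro x hx y hy hxy
  unfold rhoC at hxy
  split_ifs at hxy <;> simp_all

/-- The Type C Whitney flip of `G` along `(H, v0, v1, v2, e)` where `e = s(v0, v2)`:
its edges are the edge `{v0, v1}`, the images under `rhoC v0 v1 v2` of the edges of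
`G - e` with both endpoints in `H`, and the edges of `G - e` not having both endpoints
in `H`. -/
def typeCFlip {V : Type*} [DecidableEq V] (G : SimpleGraph V) (v0 v1 v2 : V) (H : Set V)
    (h01 : v0 ≠ v1) (h02 : v0 ≠ v2) (hv2 : v2 ∉ H) : SimpleGraph V where
  Adj a b :=
    s(a, b) = s(v0, v1) ∨
    (∃ x y : V, x ∈ H ∧ y ∈ H ∧ (G.deleteEdges {s(v0, v2)}).Adj x y ∧
      a = rhoC v0 v1 v2 x ∧ b = rhoC v0 v1 v2 y) ∨
    (¬(a ∈ H ∧ b ∈ H) ∧ (G.deleteEdges {s(v0, v2)}).Adj a b)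
  symm := by
    constructor
    rintro a b (he | ⟨x, y, hx, hy, h, ha, hb⟩ | ⟨hn, h⟩)
    · exact Or.inl (Sym2.eq_swap.trans he)
    · exact Or.inr (Or.inl ⟨y, x, hy, hx, h.symm, hb, ha⟩)
    · exact Or.inr (Or.inr ⟨fun ⟨hb', ha'⟩ => hn ⟨ha', hb'⟩, h.symm⟩)
  loopless := by
    constructor
    rintro a (he | ⟨x, y, hx, hy, h, ha, hb⟩ | ⟨_, h⟩)
    · rw [Sym2.eq_iff] at he
      rcases he with ⟨h1, h2⟩ | ⟨h1, h2⟩ <;> exact h01 (h1 ▸ h2 ▸ rfl)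
    · exact h.ne (rhoC_injOn h02 hv2 hx hy (ha ▸ hb))
    · exact h.ne rfl

lemma ZMod.eq_add_one_of_ne_mod_two : ∀ {a b : ZMod 2}, a ≠ b → b = a + 1 := by decide

lemma SimpleGraph.notMem_diff_of_adj_of_not_and_mem {V : Type*} {K : SimpleGraph V}
    {H : Set V} {v : V} (hH : ∀ x y, K.Adj x y → x ∈ H \ {v} → y ∈ H) {a b : V}
    (hab : K.Adj a b) (hn : ¬(a ∈ H ∧ b ∈ H)) : a ∉ H \ {v} ∧ b ∉ H \ {v} :=
  ⟨fun ha => hn ⟨ha.1, hH a b hab ha⟩, fun hb => hn ⟨hH b a hab.symm hb, hb.1⟩⟩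

section

variable {V : Type*} [DecidableEq V] {v0 v1 v2 : V} {H : Set V}

lemma rhoC_v0 : rhoC v0 v1 v2 v0 = v2 := if_pos rfl

lemma rhoC_v1 (h01 : v0 ≠ v1) : rhoC v0 v1 v2 v1 = v0 := by simp [rhoC, h01.symm]

lemma rhoC_of_ne {x : V} (h0 : x ≠ v0) (h1 : x ≠ v1) : rhoC v0 v1 v2 x = x := by
  simp [rhoC, h0, h1]

/-- How a colouring `c` of `G` and a colouring `c'` of its Type C flip correspond. -/
structure FlipCompatible (H : Set V) (v0 v1 v2 : V) (c c' : V → ZMod 2) : Prop where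
  map_rhoC : ∀ x ∈ H, c' (rhoC v0 v1 v2 x) = c x + 1
  eq_of_notMem : ∀ y ∉ H \ {v1}, c' y = c y

lemma exists_flipCompatible_of_snd (h01 : v0 ≠ v1) {c' : V → ZMod 2}
    (hc' : c' v0 = c' v1 + 1) : ∃ c, FlipCompatible H v0 v1 v2 c c' := by
  classical
  refine ⟨fun x => if x ∈ H then c' (rhoC v0 v1 v2 x) + 1 else c' x, fun x hx => ?_,
    fun y hy => ?_⟩
  · simp only [hx, if_true, CharTwo.add_cancel_right]
  · by_cases hyH : y ∈ H
    · obtain rfl : y = v1 := by simpa [hyH] using hy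
      simp only [hyH, if_true, rhoC_v1 h01, hc', CharTwo.add_cancel_right]
    · simp only [hyH, if_false]

lemma exists_flipCompatible_of_fst (h01 : v0 ≠ v1) (h02 : v0 ≠ v2) (h0 : v0 ∈ H)
    (hv2 : v2 ∉ H) {c : V → ZMod 2} (hc : c v2 = c v0 + 1) :
    ∃ c', FlipCompatible H v0 v1 v2 c c' := by
  classical
  refine ⟨fun y => if y = v0 then c v1 + 1 else if y ∈ H \ {v1} then c y + 1 else c y,
    fun x hx => ?_, fun y hy => ?_⟩
  · by_cases hx0 : x = v0
    · subst hx0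
      simp [rhoC_v0, h02.symm, hv2, hc]
    by_cases hx1 : x = v1
    · subst hx1
      simp [rhoC_v1 h01]
    · simp [rhoC_of_ne hx0 hx1, hx0, hx, hx1]
  · have hy0 : y ≠ v0 := by
      rintro rfl
      exact hy ⟨h0, h01⟩
    simp only [hy0, hy, if_false]

variable {G : SimpleGraph V} {h01 : v0 ≠ v1} {h02 : v0 ≠ v2} {hv2 : v2 ∉ H}

lemma typeCFlip_adj_v0_v1 : (typeCFlip G v0 v1 v2 H h01 h02 hv2).Adj v0 v1 := Or.inl rfl

lemma typeCFlip_adj_rhoC {x y : V} (hx : x ∈ H) (hy : y ∈ H)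
    (hxy : (G.deleteEdges {s(v0, v2)}).Adj x y) :
    (typeCFlip G v0 v1 v2 H h01 h02 hv2).Adj (rhoC v0 v1 v2 x) (rhoC v0 v1 v2 y) :=
  Or.inr (Or.inl ⟨x, y, hx, hy, hxy, rfl, rfl⟩)

lemma typeCFlip_adj_of_not_and_mem {a b : V} (hn : ¬(a ∈ H ∧ b ∈ H))
    (hab : (G.deleteEdges {s(v0, v2)}).Adj a b) :
    (typeCFlip G v0 v1 v2 H h01 h02 hv2).Adj a b :=
  Or.inr (Or.inr ⟨hn, hab⟩)

variable {c c' : V → ZMod 2}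

lemma FlipCompatible.typeCFlip_adj_ne (hc : FlipCompatible H v0 v1 v2 c c') (h1 : v1 ∈ H)
    (hHedge : ∀ x y : V, (G.deleteEdges {s(v0, v2)}).Adj x y → x ∈ H \ {v1} → y ∈ H)
    (hvalid : ∀ {a b : V}, G.Adj a b → c a ≠ c b) :
    ∀ {a b : V}, (typeCFlip G v0 v1 v2 H h01 h02 hv2).Adj a b → c' a ≠ c' b := by
  rintro a b (hab | ⟨x, y, hx, hy, hxy, rfl, rfl⟩ | ⟨hn, hab⟩)
  · have h01' : c' v0 ≠ c' v1 := by
      rw [← rhoC_v1 h01 (v2 := v2), hc.map_rhoC v1 h1, hc.eq_of_notMem v1 (fun h => h.2 rfl)]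
      exact succ_ne_self _
    rcases Sym2.eq_iff.1 hab with ⟨rfl, rfl⟩ | ⟨rfl, rfl⟩
    exacts [h01', h01'.symm]
  · rw [hc.map_rhoC x hx, hc.map_rhoC y hy]
    exact (add_left_injective 1).ne (hvalid (deleteEdges_adj.1 hxy).1)
  · obtain ⟨ha, hb⟩ := notMem_diff_of_adj_of_not_and_mem hHedge hab hn
    rw [hc.eq_of_notMem a ha, hc.eq_of_notMem b hb]
    exact hvalid (deleteEdges_adj.1 hab).1

lemma FlipCompatible.adj_ne (hc : FlipCompatible H v0 v1 v2 c c') (h0 : v0 ∈ H)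
    (hHedge : ∀ x y : V, (G.deleteEdges {s(v0, v2)}).Adj x y → x ∈ H \ {v1} → y ∈ H)
    (hvalid : ∀ {a b : V}, (typeCFlip G v0 v1 v2 H h01 h02 hv2).Adj a b → c' a ≠ c' b) :
    ∀ {a b : V}, G.Adj a b → c a ≠ c b := by
  intro a b hab
  by_cases he : s(a, b) = s(v0, v2)
  · have h02' : c v0 ≠ c v2 := by
      have h := hc.map_rhoC v0 h0
      rw [rhoC_v0, hc.eq_of_notMem v2 (fun h => hv2 h.1)] at h
      rw [h]
      exact (succ_ne_self _).symm
    rcases Sym2.eq_iff.1 he with ⟨rfl, rfl⟩ | ⟨rfl, rfl⟩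
    exacts [h02', h02'.symm]
  have hK : (G.deleteEdges {s(v0, v2)}).Adj a b := deleteEdges_adj.2 ⟨hab, he⟩
  by_cases hin : a ∈ H ∧ b ∈ H
  · have h := hvalid (typeCFlip_adj_rhoC hin.1 hin.2 hK)
    rw [hc.map_rhoC a hin.1, hc.map_rhoC b hin.2] at h
    exact fun hab' => h (by rw [hab'])
  · obtain ⟨ha, hb⟩ := notMem_diff_of_adj_of_not_and_mem hHedge hK hin
    rw [← hc.eq_of_notMem a ha, ← hc.eq_of_notMem b hb]
    exact hvalid (typeCFlip_adj_of_not_and_mem hin hK)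

end

theorem typeCFlip_bipartite_iff_general {V : Type*} [DecidableEq V] (G : SimpleGraph V)
    (v0 v1 v2 : V) (h01 : v0 ≠ v1) (h02 : v0 ≠ v2)
    (he : G.Adj v0 v2) (H : Set V) (h0 : v0 ∈ H) (h1 : v1 ∈ H) (hv2 : v2 ∉ H)
    (hHedge : ∀ x y : V, (G.deleteEdges {s(v0, v2)}).Adj x y →
      x ∈ H \ ({v1} : Set V) → y ∈ H) :
    (typeCFlip G v0 v1 v2 H h01 h02 hv2).Colorable 2 ↔ G.Colorable 2 := by
  constructor
  · rintro ⟨C'⟩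
    obtain ⟨c, hc⟩ := exists_flipCompatible_of_snd (H := H) (v2 := v2) h01
      (ZMod.eq_add_one_of_ne_mod_two (C'.valid typeCFlip_adj_v0_v1).symm)
    exact ⟨Coloring.mk c (hc.adj_ne h0 hHedge C'.valid)⟩
  · rintro ⟨C⟩
    obtain ⟨c', hc⟩ := exists_flipCompatible_of_fst h01 h02 h0 hv2
      (ZMod.eq_add_one_of_ne_mod_two (C.valid he))
    exact ⟨Coloring.mk c' (hc.typeCFlip_adj_ne h1 hHedge C.valid)⟩

/-- the Type C Whitney flip of a simple graph is bipartite (2-colorable) if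
and only if the original graph is bipartite. -/
theorem typeCFlip_bipartite_iff {V : Type*} [DecidableEq V] (G : SimpleGraph V)
    (v0 v1 v2 : V) (h01 : v0 ≠ v1) (h02 : v0 ≠ v2) (h12 : v1 ≠ v2)
    (he : G.Adj v0 v2) (H : Set V) (h0 : v0 ∈ H) (h1 : v1 ∈ H) (hv2 : v2 ∉ H)
    (hHconn : ((G.deleteEdges {s(v0, v2)}).induce H).Connected)
    (hHedge : ∀ x y : V, (G.deleteEdges {s(v0, v2)}).Adj x y →
      x ∈ H \ ({v1} : Set V) → y ∈ H) :
    (typeCFlip G v0 v1 v2 H h01 h02 hv2).Colorable 2 ↔ G.Colorable 2 :=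
  typeCFlip_bipartite_iff_general G v0 v1 v2 h01 h02 he H h0 h1 hv2 hHedge
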